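/- Let V ∈ ℝ^{p×k} have rank k, let J ∈ ℝ^{t×p}, let 0 ≤ ε ≤ 1/2, and let S : ℝ^p → ℝ^s be a linear map such that for each row Jᵢ of J, S is an ε-isometry on the subspace col(V) + span{Jᵢᵀ}. Let U ∈ ℝ^{p×k} have orthonormal columns with col(U) = col(V), and let U_S ∈ ℝ^{s×k} have orthonormal columns with col(U_S) = col(S V), where S V is the matrix whose columns are S applied to the columns of V, and let S Jᵀ denote the t-column matrix whose i-th column is S(Jᵢᵀ). Then | ‖U_Sᵀ (S Jᵀ)‖_F² − ‖Uᵀ Jᵀ‖_F² | ≤ 27ε · ‖J‖_F²; equivalently, the sketched uncertainty score ‖J‖_F² − ‖U_Sᵀ (S Jᵀ)‖_F² equals the exact score ‖J‖_F² − ‖Uᵀ Jᵀ‖_F² up to additive error 27ε·‖J‖_F². -/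

import Mathlib

/-!
Work row by row. For `x = Jᵢᵀ` and `W = col V`, orthonormality turns `‖Uᵀ x‖` and `‖U_Sᵀ S x‖`
into the norms of the orthogonal projections of `x` onto `W` and of `S x` onto `S W`.
Split `x = u + v` with `u ∈ W` and `v ⊥ W`; then `P_{SW} (S x) = S u + S w`, where `S w` is the
projection of `S v`. Polarization shows that an `ε`-isometry nearly preserves orthogonality,
`⟪S w, S v⟫ ≤ 2ε ‖w‖ ‖v‖`, and since `‖S w‖² = ⟪S w, S v⟫` and `‖w‖ ≤ 2 ‖S w‖` this forces
`‖S w‖ ≤ 4ε ‖v‖`. Hence `‖P_{SW} (S x)‖` is within `5ε ‖x‖` of `‖u‖ = ‖P_W x‖`, and squaring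
costs at most another factor `9/2`.
-/

open Matrix RealInnerProductSpace

def LinearMap.IsApproxIsometryOn {E F : Type*} [NormedAddCommGroup E] [InnerProductSpace ℝ E]
    [NormedAddCommGroup F] [InnerProductSpace ℝ F]
    (S : E →ₗ[ℝ] F) (ε : ℝ) (T : Submodule ℝ E) : Prop :=
  ∀ w ∈ T, (1 - ε) * ‖w‖ ≤ ‖S w‖ ∧ ‖S w‖ ≤ (1 + ε) * ‖w‖

namespace LinearMap.IsApproxIsometryOn

variable {E F : Type*} [NormedAddCommGroup E] [InnerProductSpace ℝ E]
  [NormedAddCommGroup F] [InnerProductSpace ℝ F]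
  {S : E →ₗ[ℝ] F} {ε : ℝ} {T : Submodule ℝ E}

lemma sq_norm_le (hS : S.IsApproxIsometryOn ε T) {z : E} (hz : z ∈ T) :
    ‖S z‖ ^ 2 ≤ (1 + ε) ^ 2 * ‖z‖ ^ 2 := by
  rw [← mul_pow]
  exact pow_le_pow_left₀ (norm_nonneg _) (hS z hz).2 2

lemma le_sq_norm (hS : S.IsApproxIsometryOn ε T) (hε : ε ≤ 1) {z : E} (hz : z ∈ T) :
    (1 - ε) ^ 2 * ‖z‖ ^ 2 ≤ ‖S z‖ ^ 2 := by
  rw [← mul_pow]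
  exact pow_le_pow_left₀ (by have := norm_nonneg z; nlinarith) (hS z hz).1 2

lemma inner_le_of_inner_eq_zero (hS : S.IsApproxIsometryOn ε T) (hε : ε ≤ 1) {w v : E}
    (hw : w ∈ T) (hv : v ∈ T) (hwv : ⟪w, v⟫ = 0) :
    ⟪S w, S v⟫ ≤ ε * (‖w‖ ^ 2 + ‖v‖ ^ 2) := by
  have hadd := hS.sq_norm_le (T.add_mem hw hv)
  have hsub := hS.le_sq_norm hε (T.sub_mem hw hv)
  rw [norm_add_sq_real, hwv, map_add, norm_add_sq_real] at hadd
  rw [norm_sub_sq_real, hwv, map_sub, norm_sub_sq_real] at hsub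
  nlinarith

lemma inner_le_mul_norm_of_inner_eq_zero (hS : S.IsApproxIsometryOn ε T) (hε : ε ≤ 1)
    {w v : E} (hw : w ∈ T) (hv : v ∈ T) (hwv : ⟪w, v⟫ = 0) :
    ⟪S w, S v⟫ ≤ 2 * ε * (‖w‖ * ‖v‖) := by
  rcases (mul_nonneg (norm_nonneg w) (norm_nonneg v)).eq_or_lt with h0 | hpos
  · rcases mul_eq_zero.1 h0.symm with h | h <;> simp [norm_eq_zero.1 h]
  -- for vectors of equal norm, `ε (‖a‖² + ‖b‖²) = 2ε ‖a‖ ‖b‖`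
  have key := hS.inner_le_of_inner_eq_zero hε (T.smul_mem ‖v‖ hw) (T.smul_mem ‖w‖ hv)
    (by rw [real_inner_smul_left, real_inner_smul_right, hwv]; ring)
  simp only [map_smul, real_inner_smul_left, real_inner_smul_right, norm_smul, norm_norm] at key
  nlinarith

lemma norm_le_of_sq_norm_eq_inner (hS : S.IsApproxIsometryOn ε T) (hε0 : 0 ≤ ε)
    (hε1 : ε ≤ 1 / 2) {w v : E} (hw : w ∈ T) (hv : v ∈ T) (hwv : ⟪w, v⟫ = 0)
    (h : ‖S w‖ ^ 2 = ⟪S w, S v⟫) :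
    ‖S w‖ ≤ 4 * ε * ‖v‖ := by
  have hw2 : ‖w‖ ≤ 2 * ‖S w‖ := by nlinarith [(hS w hw).1, norm_nonneg w]
  have hsq : ‖S w‖ * ‖S w‖ ≤ ‖S w‖ * (4 * ε * ‖v‖) := by
    nlinarith [hS.inner_le_mul_norm_of_inner_eq_zero (by linarith) hw hv hwv,
      mul_nonneg hε0 (norm_nonneg v)]
  rcases (norm_nonneg (S w)).eq_or_lt with h0 | hpos
  · rw [← h0]; positivity
  · exact le_of_mul_le_mul_left hsq hpos

end LinearMap.IsApproxIsometryOn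

lemma abs_sq_sub_sq_le_of_abs_sub_le {a b c δ : ℝ} (ha : 0 ≤ a) (hb : 0 ≤ b) (hbc : b ≤ c)
    (h : |a - b| ≤ δ) : |a ^ 2 - b ^ 2| ≤ δ * (2 * c + δ) := by
  have hsum : |a + b| ≤ 2 * c + δ := by
    rw [abs_of_nonneg (by positivity)]
    linarith [(abs_le.1 h).2]
  rw [sq_sub_sq, abs_mul, mul_comm δ]
  exact mul_le_mul hsum h (abs_nonneg _) ((abs_nonneg _).trans hsum)

section Projection

variable {E F : Type*} [NormedAddCommGroup E] [InnerProductSpace ℝ E]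
  [NormedAddCommGroup F] [InnerProductSpace ℝ F]

lemma Submodule.sq_norm_starProjection_eq_inner (K : Submodule ℝ E) [K.HasOrthogonalProjection]
    (y : E) : ‖K.starProjection y‖ ^ 2 = ⟪K.starProjection y, y⟫ := by
  have h := K.starProjection_inner_eq_zero y _ (K.starProjection_apply_mem y)
  rw [inner_sub_left, real_inner_comm] at h
  rw [← real_inner_self_eq_norm_sq]
  linarith

theorem abs_sq_norm_starProjection_map_sub_le {S : E →ₗ[ℝ] F} {ε : ℝ} {W : Submodule ℝ E}
    [W.HasOrthogonalProjection] [(W.map S).HasOrthogonalProjection] {x : E}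
    (hS : S.IsApproxIsometryOn ε (W ⊔ Submodule.span ℝ {x})) (hε0 : 0 ≤ ε) (hε1 : ε ≤ 1 / 2) :
    |‖(W.map S).starProjection (S x)‖ ^ 2 - ‖W.starProjection x‖ ^ 2| ≤ 27 * ε * ‖x‖ ^ 2 := by
  set u := W.starProjection x
  set v := x - u
  have hx : u + v = x := add_sub_cancel u x
  have huW : u ∈ W := W.starProjection_apply_mem x
  have hv_perp : ∀ z ∈ W, ⟪v, z⟫ = 0 := W.starProjection_inner_eq_zero x
  have hWT : W ≤ W ⊔ Submodule.span ℝ {x} := le_sup_left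
  have hxT : x ∈ W ⊔ Submodule.span ℝ {x} :=
    Submodule.mem_sup_right (Submodule.mem_span_singleton_self x)
  have hvT : v ∈ W ⊔ Submodule.span ℝ {x} := Submodule.sub_mem _ hxT (hWT huW)
  obtain ⟨w, hwW, hSw⟩ := Submodule.mem_map.1 ((W.map S).starProjection_apply_mem (S v))
  have hproj : (W.map S).starProjection (S x) = S u + S w := by
    rw [hSw, ← (W.map S).starProjection_eq_self_iff.2 (Submodule.mem_map_of_mem huW),
      ← map_add, ← map_add, hx]
  have hSw_le : ‖S w‖ ≤ 4 * ε * ‖v‖ :=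
    hS.norm_le_of_sq_norm_eq_inner hε0 hε1 (hWT hwW) hvT
      (by rw [real_inner_comm]; exact hv_perp w hwW)
      (hSw ▸ (W.map S).sq_norm_starProjection_eq_inner (S v))
  have hpyth : ‖x‖ ^ 2 = ‖u‖ ^ 2 + ‖v‖ ^ 2 := by
    rw [← hx, norm_add_sq_real, real_inner_comm, hv_perp u huW]
    ring
  have hu_le : ‖u‖ ≤ ‖x‖ := by nlinarith [norm_nonneg u, norm_nonneg x, norm_nonneg v]
  have hv_le : ‖v‖ ≤ ‖x‖ := by nlinarith [norm_nonneg u, norm_nonneg x, norm_nonneg v]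
  have hSu : |‖S u‖ - ‖u‖| ≤ ε * ‖u‖ := by
    have := hS u (hWT huW); rw [abs_le]; constructor <;> linarith
  have hdist : |‖S u + S w‖ - ‖u‖| ≤ 5 * ε * ‖x‖ := by
    calc |‖S u + S w‖ - ‖u‖| ≤ |‖S u + S w‖ - ‖S u‖| + |‖S u‖ - ‖u‖| := abs_sub_le _ _ _
      _ ≤ ‖S w‖ + ε * ‖u‖ := by
          gcongr
          simpa using abs_norm_sub_norm_le (S u + S w) (S u)
      _ ≤ 5 * ε * ‖x‖ := by nlinarith
  rw [hproj]
  calc _ ≤ 5 * ε * ‖x‖ * (2 * ‖x‖ + 5 * ε * ‖x‖) :=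
        abs_sq_sub_sq_le_of_abs_sub_le (norm_nonneg _) (norm_nonneg _) hu_le hdist
    _ ≤ 27 * ε * ‖x‖ ^ 2 := by nlinarith [mul_nonneg hε0 (sq_nonneg ‖x‖)]

end Projection

lemma LinearMap.norm_starProjection_range_eq_norm_adjoint {𝕜 K E : Type*} [RCLike 𝕜]
    [NormedAddCommGroup K] [InnerProductSpace 𝕜 K] [FiniteDimensional 𝕜 K]
    [NormedAddCommGroup E] [InnerProductSpace 𝕜 E] [FiniteDimensional 𝕜 E]
    (A : K →ₗ[𝕜] E) (hA : A.adjoint ∘ₗ A = LinearMap.id) (y : E) :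
    ‖(LinearMap.range A).starProjection y‖ = ‖A.adjoint y‖ := by
  have hA' : ∀ a, A.adjoint (A a) = a := fun a => by rw [← LinearMap.comp_apply, hA]; rfl
  have hproj : (LinearMap.range A).starProjection y = A (A.adjoint y) := by
    refine Submodule.eq_starProjection_of_mem_of_inner_eq_zero ⟨_, rfl⟩ ?_
    rintro _ ⟨z, rfl⟩
    rw [← LinearMap.adjoint_inner_left, map_sub, hA', sub_self, inner_zero_left]
  have hnorm : (‖A (A.adjoint y)‖ : 𝕜) ^ 2 = (‖A.adjoint y‖ : 𝕜) ^ 2 := by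
    rw [← inner_self_eq_norm_sq_to_K, ← inner_self_eq_norm_sq_to_K,
      ← LinearMap.adjoint_inner_left, hA']
  rw [hproj, ← sq_eq_sq₀ (norm_nonneg _) (norm_nonneg _)]
  exact_mod_cast hnorm

namespace Matrix

variable {l m n o : Type*}

lemma norm_starProjection_eq_norm_transpose_toEuclideanLin [Fintype m] [Fintype n]
    [DecidableEq m] [DecidableEq n] {U : Matrix m n ℝ} (hU : Uᵀ * U = 1)
    {W : Submodule ℝ (EuclideanSpace ℝ m)} (hUW : LinearMap.range (toEuclideanLin U) = W)
    (y : EuclideanSpace ℝ m) :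
    ‖W.starProjection y‖ = ‖toEuclideanLin Uᵀ y‖ := by
  subst hUW
  have hadj : (toEuclideanLin U).adjoint = toEuclideanLin Uᵀ := by
    rw [← toEuclideanLin_conjTranspose_eq_adjoint, conjTranspose_eq_transpose_of_trivial]
  rw [LinearMap.norm_starProjection_range_eq_norm_adjoint _ (by
    rw [hadj, ← toLpLin_mul_same, hU, toLpLin_one]), hadj]

lemma sum_sq_mul_apply [Fintype l] [Fintype m] [DecidableEq m] (M : Matrix l m ℝ)
    (N : Matrix m o ℝ) (i : o) :
    ∑ a, (M * N) a i ^ 2 = ‖toEuclideanLin M (WithLp.toLp 2 fun j => N j i)‖ ^ 2 := by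
  simp only [EuclideanSpace.real_norm_sq_eq, toLpLin_apply, mul_apply, mulVec, dotProduct]

lemma toEuclideanLin_of_map_col [Fintype n] [DecidableEq n] (V : Matrix m n ℝ)
    (S : EuclideanSpace ℝ m →ₗ[ℝ] EuclideanSpace ℝ l) :
    toEuclideanLin (of fun a j => S ((EuclideanSpace.equiv m ℝ).symm fun r => V r j) a)
      = S ∘ₗ toEuclideanLin V := by
  refine (EuclideanSpace.basisFun n ℝ).toBasis.ext fun j => ?_
  simp only [OrthonormalBasis.coe_toBasis, EuclideanSpace.basisFun_apply, toLpLin_apply,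
    PiLp.ofLp_single, mulVec_single_one, LinearMap.coe_comp, Function.comp_apply]
  rfl

end Matrix

theorem sketched_uncertainty_score_close_general
    {p s k t : ℕ} (V : Matrix (Fin p) (Fin k) ℝ)
    (J : Matrix (Fin t) (Fin p) ℝ)
    (ε : ℝ) (hε0 : 0 ≤ ε) (hε1 : ε ≤ 1 / 2)
    (S : EuclideanSpace ℝ (Fin p) →ₗ[ℝ] EuclideanSpace ℝ (Fin s))
    (hS : ∀ i : Fin t, ∀ w ∈ LinearMap.range (Matrix.toEuclideanLin V)
        ⊔ Submodule.span ℝ {(EuclideanSpace.equiv (Fin p) ℝ).symm fun j => J i j},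
      (1 - ε) * ‖w‖ ≤ ‖S w‖ ∧ ‖S w‖ ≤ (1 + ε) * ‖w‖)
    (U : Matrix (Fin p) (Fin k) ℝ) (hUorth : Uᵀ * U = 1)
    (hUcol : LinearMap.range (Matrix.toEuclideanLin U)
      = LinearMap.range (Matrix.toEuclideanLin V))
    (SV : Matrix (Fin s) (Fin k) ℝ)
    (hSV : SV = Matrix.of fun a j =>
      S ((EuclideanSpace.equiv (Fin p) ℝ).symm fun r => V r j) a)
    (US : Matrix (Fin s) (Fin k) ℝ) (hUSorth : USᵀ * US = 1)
    (hUScol : LinearMap.range (Matrix.toEuclideanLin US)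
      = LinearMap.range (Matrix.toEuclideanLin SV))
    (SJt : Matrix (Fin s) (Fin t) ℝ)
    (hSJt : SJt = Matrix.of fun a i =>
      S ((EuclideanSpace.equiv (Fin p) ℝ).symm fun j => J i j) a) :
    abs ((∑ a, ∑ i, (USᵀ * SJt) a i ^ 2) - ∑ a, ∑ i, (Uᵀ * Jᵀ) a i ^ 2)
      ≤ 27 * ε * ∑ i, ∑ j, J i j ^ 2 := by
  subst hSV
  rw [Matrix.toEuclideanLin_of_map_col, LinearMap.range_comp] at hUScol
  have hrow : ∀ i, |∑ a, (USᵀ * SJt) a i ^ 2 - ∑ a, (Uᵀ * Jᵀ) a i ^ 2|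
      ≤ 27 * ε * ∑ j, J i j ^ 2 := by
    intro i
    rw [Matrix.sum_sq_mul_apply, Matrix.sum_sq_mul_apply,
      ← Matrix.norm_starProjection_eq_norm_transpose_toEuclideanLin hUSorth hUScol,
      ← Matrix.norm_starProjection_eq_norm_transpose_toEuclideanLin hUorth hUcol, hSJt]
    exact (abs_sq_norm_starProjection_map_sub_le (hS i) hε0 hε1).trans_eq
      (by rw [EuclideanSpace.real_norm_sq_eq]; rfl)
  calc _ = |∑ i, (∑ a, (USᵀ * SJt) a i ^ 2 - ∑ a, (Uᵀ * Jᵀ) a i ^ 2)| := by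
        simp only [← Finset.sum_sub_distrib]
        rw [Finset.sum_comm]
    _ ≤ ∑ i, |∑ a, (USᵀ * SJt) a i ^ 2 - ∑ a, (Uᵀ * Jᵀ) a i ^ 2| := Finset.abs_sum_le_sum_abs _ _
    _ ≤ ∑ i, 27 * ε * ∑ j, J i j ^ 2 := Finset.sum_le_sum fun i _ => hrow i
    _ = _ := (Finset.mul_sum _ _ _).symm

/-- **Lemma 3 (Orthogonalizing the sketch, for matrix queries), matrix form.**
With `V` of rank `k`, `U` an orthonormal basis of `col(V)`, `U_S` an orthonormal
basis of `col(SV)`, and `S` an `ε`-isometry on `col(V) + span{Jᵢᵀ}` for each row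
`Jᵢ` of `J` (where `0 ≤ ε ≤ 1/2`), the squared Frobenius norms satisfy
`| ‖U_Sᵀ (S Jᵀ)‖_F² − ‖Uᵀ Jᵀ‖_F² | ≤ 27ε·‖J‖_F²`; equivalently the sketched
uncertainty score `‖J‖_F² − ‖U_Sᵀ (S Jᵀ)‖_F²` equals the exact score
`‖J‖_F² − ‖Uᵀ Jᵀ‖_F²` up to additive error `27ε·‖J‖_F²`. -/
theorem sketched_uncertainty_score_close
    {p s k t : ℕ} (V : Matrix (Fin p) (Fin k) ℝ) (hV : V.rank = k)
    (J : Matrix (Fin t) (Fin p) ℝ)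
    (ε : ℝ) (hε0 : 0 ≤ ε) (hε1 : ε ≤ 1 / 2)
    (S : EuclideanSpace ℝ (Fin p) →ₗ[ℝ] EuclideanSpace ℝ (Fin s))
    (hS : ∀ i : Fin t, ∀ w ∈ LinearMap.range (Matrix.toEuclideanLin V)
        ⊔ Submodule.span ℝ {(EuclideanSpace.equiv (Fin p) ℝ).symm fun j => J i j},
      (1 - ε) * ‖w‖ ≤ ‖S w‖ ∧ ‖S w‖ ≤ (1 + ε) * ‖w‖)
    (U : Matrix (Fin p) (Fin k) ℝ) (hUorth : Uᵀ * U = 1)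
    (hUcol : LinearMap.range (Matrix.toEuclideanLin U)
      = LinearMap.range (Matrix.toEuclideanLin V))
    (SV : Matrix (Fin s) (Fin k) ℝ)
    (hSV : SV = Matrix.of fun a j =>
      S ((EuclideanSpace.equiv (Fin p) ℝ).symm fun r => V r j) a)
    (US : Matrix (Fin s) (Fin k) ℝ) (hUSorth : USᵀ * US = 1)
    (hUScol : LinearMap.range (Matrix.toEuclideanLin US)
      = LinearMap.range (Matrix.toEuclideanLin SV))
    (SJt : Matrix (Fin s) (Fin t) ℝ)
    (hSJt : SJt = Matrix.of fun a i =>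
      S ((EuclideanSpace.equiv (Fin p) ℝ).symm fun j => J i j) a) :
    abs ((∑ a, ∑ i, (USᵀ * SJt) a i ^ 2) - ∑ a, ∑ i, (Uᵀ * Jᵀ) a i ^ 2)
      ≤ 27 * ε * ∑ i, ∑ j, J i j ^ 2 :=
  sketched_uncertainty_score_close_general V J ε hε0 hε1 S hS U hUorth hUcol SV hSV US hUSorth
    hUScol SJt hSJt
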